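/- arXiv:2503.02837 — 2 statements merged into one kernel-verified Lean document; each statement's English description precedes it below -/
import Mathlib

section
/- The family of matrices (E*_g · A_i · E*_h) indexed by the triples (g,h,i) ∈ E³ with (g,h,i) ∈ P is linearly independent over F and spans T as an F-vector space; in particular dim_F T = |P|. -/
open scoped Classical

namespace GDScheme

variable {n : ℕ}

/-- The vertex set of the direct product of the group divisible schemes
`GD(ℓ i, m i)`. -/
abbrev Pt (ℓ m : Fin n → ℕ) : Type := ∀ i : Fin n, Fin (ℓ i) × Fin (m i)

/-- The index set `E` of the scheme: `n`-tuples with entries in `{0,1,2}`. -/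
abbrev Lbl (n : ℕ) : Type := Fin n → Fin 3

/-- The relations of a single group divisible scheme. -/
def rel1 {a b : ℕ} (j : Fin 3) (u v : Fin a × Fin b) : Prop :=
  if j = 0 then u = v
  else if j = 1 then u ≠ v ∧ u.1 = v.1
  else u.1 ≠ v.1

/-- The relation `R_g` of the direct product scheme. -/
def Rel (ℓ m : Fin n → ℕ) (g : Lbl n) (y z : Pt ℓ m) : Prop :=
  ∀ i : Fin n, rel1 (g i) (y i) (z i)

/-- The adjacency matrix `A_g`. -/
noncomputable def Amat (F : Type) [Field F] (ℓ m : Fin n → ℕ) (g : Lbl n) :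
    Matrix (Pt ℓ m) (Pt ℓ m) F :=
  fun y z => if Rel ℓ m g y z then 1 else 0

/-- The dual idempotent `E*_g` with respect to the base point `x`. -/
noncomputable def Estar (F : Type) [Field F] (ℓ m : Fin n → ℕ) (x : Pt ℓ m) (g : Lbl n) :
    Matrix (Pt ℓ m) (Pt ℓ m) F :=
  Matrix.diagonal fun y => if Rel ℓ m g x y then 1 else 0

/-- The Terwilliger `F`-algebra with respect to the base point `x`. -/
noncomputable def Talg (F : Type) [Field F] (ℓ m : Fin n → ℕ) (x : Pt ℓ m) :
    Subalgebra F (Matrix (Pt ℓ m) (Pt ℓ m) F) :=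
  Algebra.adjoin F (Set.range (Amat F ℓ m) ∪ Set.range (Estar F ℓ m x))

/-- `𝕘_j = {i : g i = j}`. -/
def lset (g : Lbl n) (j : Fin 3) : Finset (Fin n) :=
  Finset.univ.filter fun i => g i = j

/-- `V^• = {a ∈ V : ℓ a > 2}`. -/
def bullet (ℓ : Fin n → ℕ) (V : Finset (Fin n)) : Finset (Fin n) :=
  V.filter fun a => 2 < ℓ a

/-- `V^∘ = {a ∈ V : m a > 2}`. -/
def circ (m : Fin n → ℕ) (V : Finset (Fin n)) : Finset (Fin n) :=
  V.filter fun a => 2 < m a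

/-- `(g, h, i) ∈ P`. -/
def MemP (ℓ m : Fin n → ℕ) (g h i : Lbl n) : Prop :=
  (lset g 0 ∩ lset h 1 ∪ lset g 1 ∩ lset h 0) ⊆ lset i 1 ∧
  lset i 1 ⊆
    (lset g 0 ∩ lset h 1 ∪ lset g 1 ∩ lset h 0 ∪ circ m (lset g 1 ∩ lset h 1) ∪
      lset g 2 ∩ lset h 2) ∧
  ((lset g 2 \ lset h 2) ∪ (lset h 2 \ lset g 2)) ⊆ lset i 2 ∧
  lset i 2 ⊆ ((lset g 2 \ lset h 2) ∪ (lset h 2 \ lset g 2) ∪ bullet ℓ (lset g 2 ∩ lset h 2))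

/-- Triples of subsets of `{1, …, n}`. -/
abbrev Trip (n : ℕ) : Type := Finset (Fin n) × Finset (Fin n) × Finset (Fin n)

/-- `𝔠 ∈ U_{g,h}`. -/
def MemU (ℓ m : Fin n → ℕ) (g h : Lbl n) (c : Trip n) : Prop :=
  c.1 ⊆ circ m (lset g 1 ∩ lset h 1) ∧ c.2.1 ⊆ bullet ℓ (lset g 2 ∩ lset h 2) ∧
  c.2.1 ⊆ c.2.2 ∧ c.2.2 ⊆ lset g 2 ∩ lset h 2

/-- `a ∈ U_{g,h,𝔠}`. -/
def MemUc (ℓ m : Fin n → ℕ) (g h : Lbl n) (c : Trip n) (a : Lbl n) : Prop :=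
  MemP ℓ m g h a ∧
  lset a 1 ∩ circ m (lset g 1 ∩ lset h 1) ⊆ c.1 ∧
  lset a 2 ∩ bullet ℓ (lset g 2 ∩ lset h 2) ⊆ c.2.1 ∧
  lset a 1 ∩ (lset g 2 ∩ lset h 2) ⊆ c.2.2

/-- The matrix `B_{g,h,𝔠} = Σ_{a ∈ U_{g,h,𝔠}} E*_g A_a E*_h`. -/
noncomputable def Bmat (F : Type) [Field F] (ℓ m : Fin n → ℕ) (x : Pt ℓ m)
    (g h : Lbl n) (c : Trip n) : Matrix (Pt ℓ m) (Pt ℓ m) F :=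
  ∑ a ∈ Finset.univ.filter (fun a : Lbl n => MemUc ℓ m g h c a),
    Estar F ℓ m x g * Amat F ℓ m a * Estar F ℓ m x h

/-- `k_{(U,V,W)}`. -/
def kUVW (ℓ m : Fin n → ℕ) (U V W : Finset (Fin n)) : ℕ :=
  (∏ j ∈ U, (m j - 1)) * (∏ k ∈ V, (ℓ k - 1) * m k) * ∏ l ∈ W \ V, m l

/-- `k_𝔠` for a triple of sets `𝔠`. -/
def kTrip (ℓ m : Fin n → ℕ) (c : Trip n) : ℕ := kUVW ℓ m c.1 c.2.1 c.2.2

/-- `k_g` for `g ∈ E` (the valency of `R_g`). -/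
def kE (ℓ m : Fin n → ℕ) (g : Lbl n) : ℕ :=
  (∏ h ∈ lset g 1, (m h - 1)) * ∏ i ∈ lset g 2, (ℓ i - 1) * m i

/-- `k_{[g,h,i]}`. -/
def kBr (ℓ m : Fin n → ℕ) (g h i : Lbl n) : ℕ :=
  (∏ a ∈ lset h 1 \ (lset g 1 ∪ lset i 1), (m a - 1)) *
    ∏ a ∈ lset h 2 \ (lset g 2 ∪ lset i 2), (ℓ a - 1) * m a

/-- `𝔧 ∩ 𝔨` for triples of sets. -/
def interT (c d : Trip n) : Trip n := (c.1 ∩ d.1, c.2.1 ∩ d.2.1, c.2.2 ∩ d.2.2)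

/-- `𝔧 ∪ 𝔨` for triples of sets. -/
def unionT (c d : Trip n) : Trip n := (c.1 ∪ d.1, c.2.1 ∪ d.2.1, c.2.2 ∪ d.2.2)

/-- `𝔧 ∖ i` for a triple of sets `𝔧` and `i ∈ E`. -/
def sdiffT (c : Trip n) (i : Lbl n) : Trip n :=
  (c.1 \ lset i 1, c.2.1 \ lset i 2, c.2.2 \ lset i 2)

/-- `i ∩ 𝔧` for `i ∈ E` and a triple of sets `𝔧`. -/
def capT (i : Lbl n) (c : Trip n) : Trip n :=
  (lset i 1 ∩ c.1, lset i 2 ∩ c.2.1, lset i 2 ∩ c.2.2)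

/-- The triple `(g,h,i,𝔧,𝔨) ∈ U_{g,i}`. -/
def combT (ℓ m : Fin n → ℕ) (g h i : Lbl n) (j k : Trip n) : Trip n :=
  (circ m (lset g 1 ∩ lset i 1) \ lset h 1 ∪ lset g 1 ∩ lset i 1 ∩ (j.1 ∪ k.1),
   bullet ℓ (lset g 2 ∩ lset i 2) \ lset h 2 ∪ lset g 2 ∩ lset i 2 ∩ (j.2.1 ∪ k.2.1),
   (lset g 2 ∩ lset i 2) \ lset h 2 ∪ lset g 2 ∩ lset i 2 ∩ (j.2.2 ∪ k.2.2))

/-- The central elements `C_𝔥 = Σ_{i ∈ E} k_{𝔥∖i} • B_{i,i,i∩𝔥}`. -/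
noncomputable def Cmat (F : Type) [Field F] (ℓ m : Fin n → ℕ) (x : Pt ℓ m) (c : Trip n) :
    Matrix (Pt ℓ m) (Pt ℓ m) F :=
  ∑ i : Lbl n, (kTrip ℓ m (sdiffT c i) : F) • Bmat F ℓ m x i i (capT i c)

/-- Componentwise inclusion `⪯` of triples of sets. -/
def leT (c d : Trip n) : Prop := c.1 ⊆ d.1 ∧ c.2.1 ⊆ d.2.1 ∧ c.2.2 ⊆ d.2.2

/-- `|𝔠| = |S₁| + |S₂| + |S₃|`. -/
def cardT (c : Trip n) : ℕ := c.1.card + c.2.1.card + c.2.2.card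

/-- The triple `(g,h;𝔦)`. -/
def semiT (ℓ m : Fin n → ℕ) (g h : Lbl n) (c : Trip n) : Trip n :=
  (circ m (lset g 1 ∩ lset h 1), bullet ℓ c.2.2, lset g 2 ∩ lset h 2)

/-- The matrix `D_{g,h,𝔦}` (summing over all `𝔞 ∈ U_{g,h}` with `𝔦 ⪯ 𝔞 ⪯ (g,h;𝔦)` and `k_𝔞`
nonvanishing, with sign `(-1)^(|𝔞|-|𝔦|)`; this combines the double sum over
`j` and `𝔨 ∈ U_{g,h,𝔦,j}`). -/
noncomputable def Dmat (F : Type) [Field F] (ℓ m : Fin n → ℕ) (x : Pt ℓ m)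
    (g h : Lbl n) (c : Trip n) : Matrix (Pt ℓ m) (Pt ℓ m) F :=
  ∑ a ∈ Finset.univ.filter (fun a : Trip n =>
      MemU ℓ m g h a ∧ leT c a ∧ leT a (semiT ℓ m g h c) ∧ (kTrip ℓ m a : F) ≠ 0),
    ((-1 : F) ^ (cardT a - cardT c) * (kBr ℓ m g h g : F)⁻¹ * (kTrip ℓ m a : F)⁻¹) •
      Bmat F ℓ m x g h a

/-- Every product of `h` elements of `S` vanishes. -/
def ProdZero {α : Type} [Ring α] (S : Set α) (h : ℕ) : Prop :=
  ∀ f : Fin h → α, (∀ i, f i ∈ S) → (List.ofFn f).prod = 0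

/-- The corner `E*_g T E*_g` as a set of matrices. -/
def CornerSet (F : Type) [Field F] (ℓ m : Fin n → ℕ) (x : Pt ℓ m) (g : Lbl n) :
    Set (Matrix (Pt ℓ m) (Pt ℓ m) F) :=
  {N | ∃ M ∈ Talg F ℓ m x, N = Estar F ℓ m x g * M * Estar F ℓ m x g}

/-- The center `Z(T)` as a set of matrices. -/
def CenterSet (F : Type) [Field F] (ℓ m : Fin n → ℕ) (x : Pt ℓ m) :
    Set (Matrix (Pt ℓ m) (Pt ℓ m) F) :=
  {M | M ∈ Talg F ℓ m x ∧ ∀ N ∈ Talg F ℓ m x, M * N = N * M}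

/-- The Jacobson radical of `T`, defined (as in the paper, for a finite-dimensional
algebra) as the largest nilpotent two-sided ideal, i.e. the sup of all nilpotent
two-sided ideals of `T`. -/
noncomputable def RadT (F : Type) [Field F] (ℓ m : Fin n → ℕ) (x : Pt ℓ m) :
    Submodule F (Matrix (Pt ℓ m) (Pt ℓ m) F) :=
  sSup {J | (J : Set (Matrix (Pt ℓ m) (Pt ℓ m) F)) ⊆ (Talg F ℓ m x : Set _) ∧
    (∀ a ∈ J, ∀ t ∈ Talg F ℓ m x, a * t ∈ J ∧ t * a ∈ J) ∧
    ∃ h, ProdZero (J : Set (Matrix (Pt ℓ m) (Pt ℓ m) F)) h}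

/-- `(g, h, 𝔠) ∈ 𝔻`. -/
def MemD (F : Type) [Field F] (ℓ m : Fin n → ℕ) (t : Lbl n × Lbl n × Trip n) : Prop :=
  MemU ℓ m t.1 t.2.1 t.2.2 ∧
    ((kBr ℓ m t.1 t.2.1 t.1 * kBr ℓ m t.2.1 t.1 t.2.1 * kTrip ℓ m t.2.2 : ℕ) : F) ≠ 0

/-- The invariant classifying the equivalence `∼` on `𝔻`. -/
def keyD (ℓ m : Fin n → ℕ) (t : Lbl n × Lbl n × Trip n) : Trip n :=
  (circ m (lset t.1 1 ∩ lset t.2.1 1) \ t.2.2.1,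
   bullet ℓ (lset t.1 2 ∩ lset t.2.1 2) \ t.2.2.2.1,
   (lset t.1 2 ∩ lset t.2.1 2) \ t.2.2.2.2)

/-- The equivalence relation `∼` on `𝔻`. -/
def DSetoid (F : Type) [Field F] (ℓ m : Fin n → ℕ) : Setoid {t : Lbl n × Lbl n × Trip n // MemD F ℓ m t} :=
  ⟨fun s t => keyD ℓ m s.1 = keyD ℓ m t.1, ⟨fun _ => rfl, Eq.symm, Eq.trans⟩⟩

/-- The set of `∼`-equivalence classes of `𝔻`. -/
def ClassIdx (F : Type) [Field F] (ℓ m : Fin n → ℕ) : Type :=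
  Quotient (DSetoid F ℓ m)

/-- `|𝔻(c)|` for an equivalence class `c`. -/
noncomputable def dClass (F : Type) [Field F] (ℓ m : Fin n → ℕ) (c : ClassIdx F ℓ m) : ℕ :=
  Nat.card {a : Lbl n // ∃ (b : Trip n) (hb : MemD F ℓ m (a, a, b)),
    Quotient.mk (DSetoid F ℓ m) ⟨(a, a, b), hb⟩ = c}

/-!
`T` lies in the algebra of matrices invariant under the automorphisms of the scheme fixing `x`.
This stabilizer is a product of wreath products `Sym(m_a) ≀ Sym(ℓ_a)`, and its orbits on pairs
`(y, z)` are exactly the sets on which the relations of `(x, y)`, `(x, z)`, `(y, z)` are fixed, so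
every invariant matrix is a combination of the matrices `E*_g A_i E*_h`, which lie in `T`. These
have pairwise disjoint supports, and the support of `E*_g A_i E*_h` is nonempty exactly when
`(g, h, i) ∈ P`, a condition that can be checked coordinatewise.
-/

open Equiv Function

theorem _root_.Equiv.Perm.exists_apply_eq_of_eq_iff_eq {ι α : Type*} [Finite ι] (p q : ι → α)
    (h : ∀ i j, p i = p j ↔ q i = q j) : ∃ σ : Perm α, ∀ i, σ (p i) = q i := by
  have hinj : Injective (q ∘ Set.rangeSplitting p) := fun c d hcd => by
    simpa [Set.apply_rangeSplitting, Subtype.ext_iff] using (h _ _).2 hcd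
  obtain ⟨σ, hσ⟩ := Perm.exists_extending_pair Subtype.val _ Subtype.val_injective hinj
  refine ⟨σ, fun i => (hσ ⟨p i, i, rfl⟩).trans ((h _ _).1 (Set.apply_rangeSplitting p _))⟩

theorem _root_.Fin.exists_injective_apply_eq {A a : ℕ} (hAa : A ≤ a) (k : Fin A) (u : Fin a) :
    ∃ e : Fin A → Fin a, Injective e ∧ e k = u :=
  ⟨Equiv.swap (Fin.castLE hAa k) u ∘ Fin.castLE hAa,
    (Equiv.swap _ _).injective.comp (Fin.castLE_injective _), Equiv.swap_apply_left _ _⟩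

section SingleScheme

variable {a b : ℕ}

def relIndex (u v : Fin a × Fin b) : Fin 3 :=
  if u.1 = v.1 then if u.2 = v.2 then 0 else 1 else 2

lemma rel1_iff_relIndex_eq (j : Fin 3) (u v : Fin a × Fin b) :
    rel1 j u v ↔ relIndex u v = j := by
  fin_cases j <;> by_cases h1 : u.1 = v.1 <;> by_cases h2 : u.2 = v.2 <;>
    simp [rel1, relIndex, Prod.ext_iff, h1, h2]

lemma relIndex_self (u : Fin a × Fin b) : relIndex u u = 0 := by simp [relIndex]

lemma relIndex_comm (u v : Fin a × Fin b) : relIndex u v = relIndex v u := by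
  simp only [relIndex, eq_comm]

lemma relIndex_eq_relIndex_iff {u v u' v' : Fin a × Fin b} :
    relIndex u v = relIndex u' v' ↔
      (u.1 = v.1 ↔ u'.1 = v'.1) ∧ (u.1 = v.1 → (u.2 = v.2 ↔ u'.2 = v'.2)) := by
  unfold relIndex
  split_ifs <;> simp_all

lemma relIndex_map {A B : ℕ} {e : Fin A → Fin a} {f : Fin B → Fin b} (he : Injective e)
    (hf : Injective f) (u v : Fin A × Fin B) :
    relIndex (Prod.map e f u) (Prod.map e f v) = relIndex u v := by
  simp [relIndex, he.eq_iff, hf.eq_iff]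

theorem exists_perm_relIndex_extending {ι : Type*} [Finite ι] (p q : ι → Fin a × Fin b)
    (h : ∀ i j, relIndex (p i) (p j) = relIndex (q i) (q j)) :
    ∃ σ : Perm (Fin a × Fin b), (∀ u v, relIndex (σ u) (σ v) = relIndex u v) ∧
      ∀ i, σ (p i) = q i := by
  simp only [relIndex_eq_relIndex_iff] at h
  obtain ⟨π, hπ⟩ := Perm.exists_apply_eq_of_eq_iff_eq (fun i => (p i).1) (fun i => (q i).1)
    fun i j => (h i j).1
  have hτ (c : Fin a) : ∃ τ : Perm (Fin b), ∀ i : {i // (p i).1 = c}, τ (p i).2 = (q i).2 :=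
    Perm.exists_apply_eq_of_eq_iff_eq _ _ fun i j => (h i j).2 (i.2.trans j.2.symm)
  choose τ hτ using hτ
  refine ⟨prodShear π τ, fun u v => relIndex_eq_relIndex_iff.2 ⟨π.injective.eq_iff, ?_⟩,
    fun i => Prod.ext (hπ i) (hτ _ ⟨i, rfl⟩)⟩
  intro huv
  have huv : u.1 = v.1 := π.injective huv
  simp only [prodShear_apply, huv, (τ v.1).injective.eq_iff]

def MemPAt (L M : Prop) (g h i : Fin 3) : Prop :=
  (g = 0 ∧ h = 1 ∨ g = 1 ∧ h = 0 → i = 1) ∧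
  (i = 1 → ((g = 0 ∧ h = 1 ∨ g = 1 ∧ h = 0) ∨ (g = 1 ∧ h = 1) ∧ M) ∨ g = 2 ∧ h = 2) ∧
  (g = 2 ∧ ¬h = 2 ∨ h = 2 ∧ ¬g = 2 → i = 2) ∧
  (i = 2 → (g = 2 ∧ ¬h = 2 ∨ h = 2 ∧ ¬g = 2) ∨ (g = 2 ∧ h = 2) ∧ L)

instance {L M : Prop} [Decidable L] [Decidable M] {g h i : Fin 3} :
    Decidable (MemPAt L M g h i) := by
  unfold MemPAt; infer_instance

/- `A, B, C` say which of the first coordinates of three points `u, v, w` agree, `P, Q, R` which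
of the second coordinates do. -/
set_option synthInstance.maxSize 1000 in
lemma memPAt_of_transitive : ∀ A B C P Q R L M : Bool,
    (A → B → C) → (A → C → B) → (B → C → A) → (P → Q → R) → (P → R → Q) → (Q → R → P) →
    (!A → !B → !C → L) → (!P → !Q → !R → M) →
    MemPAt L M (if A then if P then 0 else 1 else 2) (if B then if Q then 0 else 1 else 2)
      (if C then if R then 0 else 1 else 2) := by
  decide

lemma two_lt_of_pairwise_ne {k : ℕ} {c d e : Fin k} (hcd : c ≠ d) (hce : c ≠ e) (hde : d ≠ e) :
    2 < k := by
  simpa using Fintype.two_lt_card_iff.2 ⟨c, d, e, hcd, hce, hde⟩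

lemma memPAt_relIndex (u v w : Fin a × Fin b) :
    MemPAt (2 < a) (2 < b) (relIndex u v) (relIndex u w) (relIndex v w) := by
  have := memPAt_of_transitive (u.1 = v.1) (u.1 = w.1) (v.1 = w.1) (u.2 = v.2) (u.2 = w.2)
    (v.2 = w.2) (2 < a) (2 < b)
  simp only [decide_eq_true_eq, Bool.not_eq_true', decide_eq_false_iff_not] at this
  exact this (fun h1 h2 => h1.symm.trans h2) (fun h1 h2 => h1.trans h2)
    (fun h1 h2 => h1.trans h2.symm) (fun h1 h2 => h1.symm.trans h2) (fun h1 h2 => h1.trans h2)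
    (fun h1 h2 => h1.trans h2.symm) two_lt_of_pairwise_ne two_lt_of_pairwise_ne

lemma exists_relIndex_of_memPAt_small {A B : ℕ} (hA : A = 2 ∨ A = 3) (hB : B = 2 ∨ B = 3) :
    ∀ g h i, MemPAt (2 < A) (2 < B) g h i → ∃ v w : Fin A × Fin B,
      relIndex (⟨0, by omega⟩, ⟨0, by omega⟩) v = g ∧
        relIndex (⟨0, by omega⟩, ⟨0, by omega⟩) w = h ∧ relIndex v w = i := by
  rcases hA with rfl | rfl <;> rcases hB with rfl | rfl <;> decide

lemma exists_relIndex_of_memPAt (ha : 2 ≤ a) (hb : 2 ≤ b) (u : Fin a × Fin b) {g h i : Fin 3}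
    (hP : MemPAt (2 < a) (2 < b) g h i) :
    ∃ v w, relIndex u v = g ∧ relIndex u w = h ∧ relIndex v w = i := by
  -- witnesses found in `GD(min a 3, min b 3)` embed into `GD(a, b)` with `0` going to `u`
  obtain ⟨A, hA, hAa, hA2⟩ : ∃ A, (A = 2 ∨ A = 3) ∧ A ≤ a ∧ (2 < A ↔ 2 < a) :=
    ⟨min a 3, by omega, by omega, by omega⟩
  obtain ⟨B, hB, hBb, hB2⟩ : ∃ B, (B = 2 ∨ B = 3) ∧ B ≤ b ∧ (2 < B ↔ 2 < b) :=
    ⟨min b 3, by omega, by omega, by omega⟩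
  obtain ⟨v, w, hv, hw, hvw⟩ :=
    exists_relIndex_of_memPAt_small hA hB g h i (by rwa [hA2, hB2])
  obtain ⟨e, he, he0⟩ := Fin.exists_injective_apply_eq hAa ⟨0, by omega⟩ u.1
  obtain ⟨f, hf, hf0⟩ := Fin.exists_injective_apply_eq hBb ⟨0, by omega⟩ u.2
  have hu : u = Prod.map e f (⟨0, by omega⟩, ⟨0, by omega⟩) := by simp [he0, hf0]
  exact ⟨Prod.map e f v, Prod.map e f w, by rw [hu, relIndex_map he hf, hv],
    by rw [hu, relIndex_map he hf, hw], by rw [relIndex_map he hf, hvw]⟩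

end SingleScheme

section ProductScheme

variable {ℓ m : Fin n → ℕ}

def relLabel (y z : Pt ℓ m) : Lbl n := fun a => relIndex (y a) (z a)

lemma rel_iff_relLabel_eq {g : Lbl n} {y z : Pt ℓ m} : Rel ℓ m g y z ↔ relLabel y z = g := by
  simp only [Rel, rel1_iff_relIndex_eq, funext_iff, relLabel]

def relTriple (x y z : Pt ℓ m) : Lbl n × Lbl n × Lbl n :=
  (relLabel x y, relLabel x z, relLabel y z)

lemma memP_iff_forall_memPAt {g h i : Lbl n} :
    MemP ℓ m g h i ↔ ∀ a, MemPAt (2 < ℓ a) (2 < m a) (g a) (h a) (i a) := by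
  unfold MemP lset circ bullet
  simp only [Finset.subset_iff, Finset.mem_union, Finset.mem_inter, Finset.mem_sdiff,
    Finset.mem_filter, Finset.mem_univ, true_and, ← forall_and]
  rfl

theorem memP_iff_exists_relTriple_eq (hℓ : ∀ a, 2 ≤ ℓ a) (hm : ∀ a, 2 ≤ m a) (x : Pt ℓ m)
    {g h i : Lbl n} : MemP ℓ m g h i ↔ ∃ y z, relTriple x y z = (g, h, i) := by
  rw [memP_iff_forall_memPAt]
  constructor
  · intro hP
    choose y z hy hz hyz using fun a => exists_relIndex_of_memPAt (hℓ a) (hm a) (x a) (hP a)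
    exact ⟨y, z, Prod.ext (funext hy) (Prod.ext (funext hz) (funext hyz))⟩
  · rintro ⟨y, z, hyz⟩ a
    obtain ⟨rfl, rfl, rfl⟩ := Prod.ext_iff.1 hyz |>.imp_right Prod.ext_iff.1
    exact memPAt_relIndex (x a) (y a) (z a)

def IsAutFixing (x : Pt ℓ m) (σ : Perm (Pt ℓ m)) : Prop :=
  σ x = x ∧ ∀ y z, relLabel (σ y) (σ z) = relLabel y z

theorem exists_isAutFixing_of_relTriple_eq {x y z y' z' : Pt ℓ m}
    (h : relTriple x y z = relTriple x y' z') :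
    ∃ σ, IsAutFixing x σ ∧ σ y = y' ∧ σ z = z' := by
  simp only [relTriple, relLabel, Prod.mk.injEq, funext_iff] at h
  obtain ⟨hy, hz, hyz⟩ := h
  have hσ (a : Fin n) := exists_perm_relIndex_extending ![x a, y a, z a] ![x a, y' a, z' a] <| by
    intro i j
    fin_cases i <;> fin_cases j <;> simp [relIndex_self, hy, hz, hyz, relIndex_comm _ (x _),
      relIndex_comm (z _), relIndex_comm (z' _)]
  choose σ hσ hσp using hσ
  exact ⟨piCongrRight σ, ⟨funext fun a => hσp a 0, fun u v => funext fun a => hσ a _ _⟩,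
    funext fun a => hσp a 1, funext fun a => hσp a 2⟩

end ProductScheme

section TerwilligerAlgebra

variable {F : Type} [Field F] {ℓ m : Fin n → ℕ}

noncomputable def tripleMat (F : Type) [Field F] (ℓ m : Fin n → ℕ) (x : Pt ℓ m)
    (t : Lbl n × Lbl n × Lbl n) : Matrix (Pt ℓ m) (Pt ℓ m) F :=
  Estar F ℓ m x t.1 * Amat F ℓ m t.2.2 * Estar F ℓ m x t.2.1

lemma tripleMat_apply (x : Pt ℓ m) (t : Lbl n × Lbl n × Lbl n) (y z : Pt ℓ m) :
    tripleMat F ℓ m x t y z = if relTriple x y z = t then 1 else 0 := by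
  obtain ⟨g, h, i⟩ := t
  simp only [tripleMat, Estar, Amat, Matrix.mul_diagonal, Matrix.diagonal_mul,
    rel_iff_relLabel_eq, relTriple, Prod.mk.injEq]
  split_ifs <;> simp_all

lemma tripleMat_mem_Talg (x : Pt ℓ m) (t : Lbl n × Lbl n × Lbl n) :
    tripleMat F ℓ m x t ∈ Talg F ℓ m x :=
  mul_mem (mul_mem (Algebra.subset_adjoin (Or.inr ⟨t.1, rfl⟩))
    (Algebra.subset_adjoin (Or.inl ⟨t.2.2, rfl⟩))) (Algebra.subset_adjoin (Or.inr ⟨t.2.1, rfl⟩))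

theorem submatrix_eq_of_mem_Talg {x : Pt ℓ m} {σ : Perm (Pt ℓ m)} (hσ : IsAutFixing x σ)
    {M : Matrix (Pt ℓ m) (Pt ℓ m) F} (hM : M ∈ Talg F ℓ m x) : M.submatrix σ σ = M := by
  have hle : Talg F ℓ m x ≤ AlgHom.equalizer (Matrix.reindexAlgEquiv F F σ.symm).toAlgHom
      (AlgHom.id F _) := by
    refine Algebra.adjoin_le ?_
    rintro _ (⟨i, rfl⟩ | ⟨g, rfl⟩) <;> ext y z
    · simp [Amat, rel_iff_relLabel_eq, hσ.2]
    · have hx (y : Pt ℓ m) : relLabel x (σ y) = relLabel x y := by simpa [hσ.1] using hσ.2 x y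
      simp [Estar, Matrix.diagonal_apply, rel_iff_relLabel_eq, hx]
  simpa using hle hM

theorem mem_span_tripleMat_of_submatrix_eq (hℓ : ∀ a, 2 ≤ ℓ a) (hm : ∀ a, 2 ≤ m a)
    (x : Pt ℓ m) {M : Matrix (Pt ℓ m) (Pt ℓ m) F}
    (hM : ∀ σ, IsAutFixing x σ → M.submatrix σ σ = M) :
    M ∈ Submodule.span F
      (Set.range fun t : {t : Lbl n × Lbl n × Lbl n // MemP ℓ m t.1 t.2.1 t.2.2} =>
        tripleMat F ℓ m x t.1) := by
  have hfac : FactorsThrough (fun p : Pt ℓ m × Pt ℓ m => M p.1 p.2)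
      (fun p => relTriple x p.1 p.2) := by
    rintro ⟨y, z⟩ ⟨y', z'⟩ h
    obtain ⟨σ, hσ, rfl, rfl⟩ := exists_isAutFixing_of_relTriple_eq h
    exact (congrFun (congrFun (hM σ hσ) y) z).symm
  set φ := extend (fun p : Pt ℓ m × Pt ℓ m => relTriple x p.1 p.2) (fun p => M p.1 p.2) 0
  have hM : M = ∑ t : {t : Lbl n × Lbl n × Lbl n // MemP ℓ m t.1 t.2.1 t.2.2},
      φ t.1 • tripleMat F ℓ m x t.1 := by
    ext y z
    have hyz : MemP ℓ m (relTriple x y z).1 (relTriple x y z).2.1 (relTriple x y z).2.2 :=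
      (memP_iff_exists_relTriple_eq hℓ hm x).2 ⟨y, z, rfl⟩
    rw [Matrix.sum_apply, Finset.sum_eq_single ⟨_, hyz⟩]
    · simpa [tripleMat_apply, φ] using (hfac.extend_apply 0 (y, z)).symm
    · rintro t - ht
      simp only [Matrix.smul_apply, tripleMat_apply, smul_eq_mul, mul_ite, mul_one, mul_zero]
      exact if_neg fun h => ht (Subtype.ext h.symm)
    · simp
  rw [hM]
  exact Submodule.sum_mem _ fun t _ => Submodule.smul_mem _ _ (Submodule.subset_span ⟨t, rfl⟩)

theorem _root_.Matrix.linearIndependent_of_forall_exists_apply_eq_ite {ι α β K : Type*} [Fintype ι]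
    [DecidableEq ι] [Ring K] (f : ι → Matrix α β K)
    (h : ∀ i, ∃ y z, ∀ j, f j y z = if j = i then 1 else 0) : LinearIndependent K f := by
  refine Fintype.linearIndependent_iff.2 fun c hc i => ?_
  obtain ⟨y, z, hyz⟩ := h i
  simpa [Matrix.sum_apply, hyz] using congrFun (congrFun hc y) z

theorem linearIndependent_tripleMat (hℓ : ∀ a, 2 ≤ ℓ a) (hm : ∀ a, 2 ≤ m a) (x : Pt ℓ m) :
    LinearIndependent F fun t : {t : Lbl n × Lbl n × Lbl n // MemP ℓ m t.1 t.2.1 t.2.2} =>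
      tripleMat F ℓ m x t.1 := by
  refine Matrix.linearIndependent_of_forall_exists_apply_eq_ite _ fun t => ?_
  obtain ⟨y, z, hyz⟩ := (memP_iff_exists_relTriple_eq hℓ hm x).1 t.2
  exact ⟨y, z, fun s => by simp [tripleMat_apply, hyz, Subtype.ext_iff, eq_comm]⟩

end TerwilligerAlgebra

theorem statement1_general (F : Type) [Field F] (n : ℕ) (ℓ m : Fin n → ℕ)
    (hℓ : ∀ i, 2 ≤ ℓ i) (hm : ∀ i, 2 ≤ m i) (x : Pt ℓ m) :
    LinearIndependent F
      (fun t : {t : Lbl n × Lbl n × Lbl n // MemP ℓ m t.1 t.2.1 t.2.2} =>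
        Estar F ℓ m x t.1.1 * Amat F ℓ m t.1.2.2 * Estar F ℓ m x t.1.2.1) ∧
    Submodule.span F
      (Set.range fun t : {t : Lbl n × Lbl n × Lbl n // MemP ℓ m t.1 t.2.1 t.2.2} =>
        Estar F ℓ m x t.1.1 * Amat F ℓ m t.1.2.2 * Estar F ℓ m x t.1.2.1) =
      Subalgebra.toSubmodule (Talg F ℓ m x) ∧
    Module.finrank F ↥(Talg F ℓ m x) =
      Nat.card {t : Lbl n × Lbl n × Lbl n // MemP ℓ m t.1 t.2.1 t.2.2} := by
  have hLI := linearIndependent_tripleMat (F := F) hℓ hm x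
  have hspan : Submodule.span F (Set.range fun t : {t // MemP ℓ m t.1 t.2.1 t.2.2} =>
      tripleMat F ℓ m x t.1) = Subalgebra.toSubmodule (Talg F ℓ m x) :=
    le_antisymm (Submodule.span_le.2 <| Set.range_subset_iff.2 fun t => tripleMat_mem_Talg x t.1)
      fun M hM => mem_span_tripleMat_of_submatrix_eq hℓ hm x fun σ hσ =>
        submatrix_eq_of_mem_Talg hσ hM
  refine ⟨hLI, hspan, ?_⟩
  rw [Nat.card_eq_fintype_card, ← finrank_span_eq_card hLI, hspan]
  rfl

/-- The family `(E*_g A_i E*_h)` indexed by the triples `(g,h,i) ∈ P` is linearly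
independent over `F` and spans `T`; in particular `dim_F T = |P|`. -/
theorem statement1 (F : Type) [Field F] (n : ℕ) (hn : 1 ≤ n) (ℓ m : Fin n → ℕ)
    (hℓ : ∀ i, 2 ≤ ℓ i) (hm : ∀ i, 2 ≤ m i) (x : Pt ℓ m) :
    LinearIndependent F
      (fun t : {t : Lbl n × Lbl n × Lbl n // MemP ℓ m t.1 t.2.1 t.2.2} =>
        Estar F ℓ m x t.1.1 * Amat F ℓ m t.1.2.2 * Estar F ℓ m x t.1.2.1) ∧
    Submodule.span F
      (Set.range fun t : {t : Lbl n × Lbl n × Lbl n // MemP ℓ m t.1 t.2.1 t.2.2} =>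
        Estar F ℓ m x t.1.1 * Amat F ℓ m t.1.2.2 * Estar F ℓ m x t.1.2.1) =
      Subalgebra.toSubmodule (Talg F ℓ m x) ∧
    Module.finrank F ↥(Talg F ℓ m x) =
      Nat.card {t : Lbl n × Lbl n × Lbl n // MemP ℓ m t.1 t.2.1 t.2.2} :=
  statement1_general F n ℓ m hℓ hm x

end GDScheme
end

section
/- The F-dimension of the Terwilliger F-algebra T equals 2^{n_1+2n_4} · 3^{n_4} · 5^{n_1} · 11^{n_2+n_3}. -/
open scoped Classical

namespace GDScheme

variable {n : ℕ}

/-- 3-transitivity-style extension: a partial matching on three points with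
consistent coincidence pattern extends to a permutation. -/
theorem exists_perm_three {α : Type*} [DecidableEq α] (a b c a' b' c' : α)
    (hab : a = b ↔ a' = b') (hac : a = c ↔ a' = c') (hbc : b = c ↔ b' = c') :
    ∃ σ : Equiv.Perm α, σ a = a' ∧ σ b = b' ∧ σ c = c' := by
  set σ₁ := Equiv.swap a a' with hσ₁
  set σ₂ := Equiv.swap (σ₁ b) b' with hσ₂
  set σ₃ := Equiv.swap (σ₂ (σ₁ c)) c' with hσ₃
  have h1a : σ₁ a = a' := Equiv.swap_apply_left a a'
  have h2a : σ₂ a' = a' := by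
    by_cases hba : a = b
    · have hba' : a' = b' := hab.mp hba
      rw [hσ₂, ← hba, h1a, ← hba']
      exact Equiv.swap_apply_right a' a'
    · have h1 : σ₁ b ≠ a' := by
        rw [← h1a]; exact fun h => hba (σ₁.injective h).symm
      have h2 : b' ≠ a' := fun h => hba (hab.mpr h.symm)
      exact Equiv.swap_apply_of_ne_of_ne (Ne.symm h1) (Ne.symm h2)
  have h2b : σ₂ (σ₁ b) = b' := Equiv.swap_apply_left _ _
  have h3a : σ₃ a' = a' := by
    by_cases hca : a = c
    · have hca' : a' = c' := hac.mp hca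
      rw [hσ₃, ← hca, h1a, h2a, ← hca']
      exact Equiv.swap_apply_right a' a'
    · have h1 : σ₂ (σ₁ c) ≠ a' := by
        intro h
        apply hca
        have : σ₂ (σ₁ c) = σ₂ (σ₁ a) := by rw [h, h1a, h2a]
        exact (σ₁.injective (σ₂.injective this)).symm
      have h2 : c' ≠ a' := fun h => hca (hac.mpr h.symm)
      exact Equiv.swap_apply_of_ne_of_ne (Ne.symm h1) (Ne.symm h2)
  have h3b : σ₃ b' = b' := by
    by_cases hcb : b = c
    · have hcb' : b' = c' := hbc.mp hcb
      rw [hσ₃, ← hcb, h2b, ← hcb']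
      exact Equiv.swap_apply_right b' b'
    · have h1 : σ₂ (σ₁ c) ≠ b' := by
        intro h
        apply hcb
        have : σ₂ (σ₁ c) = σ₂ (σ₁ b) := by rw [h, h2b]
        exact (σ₁.injective (σ₂.injective this)).symm
      have h2 : c' ≠ b' := fun h => hcb (hbc.mpr h.symm)
      exact Equiv.swap_apply_of_ne_of_ne (Ne.symm h1) (Ne.symm h2)
  have h3c : σ₃ (σ₂ (σ₁ c)) = c' := Equiv.swap_apply_left _ _
  refine ⟨(σ₁.trans σ₂).trans σ₃, ?_, ?_, ?_⟩
  · simp only [Equiv.trans_apply]; rw [h1a, h2a, h3a]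
  · simp only [Equiv.trans_apply]; rw [h2b, h3b]
  · simp only [Equiv.trans_apply]; rw [h3c]

variable {α β : Type*} [DecidableEq α] [DecidableEq β]

/-- Classification of a pair of points of `α × β`. -/
noncomputable def clp (u v : α × β) : Fin 3 :=
  if u = v then 0 else if u.1 = v.1 then 1 else 2

theorem clp_eq_zero {u v : α × β} : clp u v = 0 ↔ u = v := by
  unfold clp; split_ifs <;> simp_all

theorem clp_eq_one {u v : α × β} : clp u v = 1 ↔ u ≠ v ∧ u.1 = v.1 := by
  unfold clp; split_ifs <;> simp_all

theorem clp_eq_two {u v : α × β} : clp u v = 2 ↔ u.1 ≠ v.1 := by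
  unfold clp
  split_ifs with h h1
  · subst h; simp
  · simp [h1]
  · simp [h1]

theorem clp_fst_iff {u v u' v' : α × β} (h : clp u v = clp u' v') :
    u.1 = v.1 ↔ u'.1 = v'.1 := by
  constructor
  · intro h1
    by_contra h2
    have : clp u' v' = 2 := clp_eq_two.mpr h2
    rw [this] at h; exact (clp_eq_two.mp h) h1
  · intro h1
    by_contra h2
    have : clp u v = 2 := clp_eq_two.mpr h2
    rw [this] at h; exact (clp_eq_two.mp h.symm) h1

theorem clp_pt_iff {u v u' v' : α × β} (h : clp u v = clp u' v') :
    u = v ↔ u' = v' := by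
  constructor
  · rintro rfl
    have : clp u u = 0 := clp_eq_zero.mpr rfl
    rw [this] at h; exact clp_eq_zero.mp h.symm
  · rintro rfl
    have : clp u' u' = 0 := clp_eq_zero.mpr rfl
    rw [this] at h; exact clp_eq_zero.mp h

theorem clp_comm (u v : α × β) : clp u v = clp v u := by
  unfold clp
  by_cases h : u = v
  · simp [h]
  · rw [if_neg h, if_neg (Ne.symm h)]
    by_cases h1 : u.1 = v.1
    · rw [if_pos h1, if_pos h1.symm]
    · rw [if_neg h1, if_neg (Ne.symm h1)]

/-- Orbit transitivity: pairs with the same classification pattern relative to a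
base point are related by a pattern-preserving permutation fixing the base point. -/
theorem exists_shear (x₀ u v u' v' : α × β)
    (h1 : x₀ = u ↔ x₀ = u') (h2 : x₀.1 = u.1 ↔ x₀.1 = u'.1)
    (h3 : x₀ = v ↔ x₀ = v') (h4 : x₀.1 = v.1 ↔ x₀.1 = v'.1)
    (h5 : u = v ↔ u' = v') (h6 : u.1 = v.1 ↔ u'.1 = v'.1) :
    ∃ σ : α × β ≃ α × β, (∀ p q, clp (σ p) (σ q) = clp p q) ∧
      σ x₀ = x₀ ∧ σ u = u' ∧ σ v = v' := by
  obtain ⟨π, hπx, hπu, hπv⟩ := exists_perm_three x₀.1 u.1 v.1 x₀.1 u'.1 v'.1 h2 h4 h6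
  -- the three partial constraints for the fibre permutation over `p : α`
  set sa : α → β := fun p => if p = x₀.1 then x₀.2 else if p = u.1 then u.2 else v.2 with hsa
  set ta : α → β := fun p => if p = x₀.1 then x₀.2 else if p = u.1 then u'.2 else v'.2 with hta
  set sb : α → β := fun p => if p = u.1 then u.2 else sa p with hsb
  set tb : α → β := fun p => if p = u.1 then u'.2 else ta p with htb
  set sc : α → β := fun p => if p = v.1 then v.2 else sa p with hsc
  set tc : α → β := fun p => if p = v.1 then v'.2 else ta p with htc
  -- key coincidence equivalences
  have EXU : ∀ p : α, p = x₀.1 → p = u.1 → (x₀.2 = u.2 ↔ x₀.2 = u'.2) := by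
    intro p hpx hpu
    have e1 : x₀.1 = u.1 := hpx ▸ hpu
    have e2 : x₀.1 = u'.1 := h2.mp e1
    constructor
    · intro h; exact congrArg Prod.snd (h1.mp (Prod.ext e1 h))
    · intro h; exact congrArg Prod.snd (h1.mpr (Prod.ext e2 h))
  have EXV : ∀ p : α, p = x₀.1 → p = v.1 → (x₀.2 = v.2 ↔ x₀.2 = v'.2) := by
    intro p hpx hpv
    have e1 : x₀.1 = v.1 := hpx ▸ hpv
    have e2 : x₀.1 = v'.1 := h4.mp e1
    constructor
    · intro h; exact congrArg Prod.snd (h3.mp (Prod.ext e1 h))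
    · intro h; exact congrArg Prod.snd (h3.mpr (Prod.ext e2 h))
  have EUV : ∀ p : α, p = u.1 → p = v.1 → (u.2 = v.2 ↔ u'.2 = v'.2) := by
    intro p hpu hpv
    have e1 : u.1 = v.1 := hpu ▸ hpv
    have e2 : u'.1 = v'.1 := h6.mp e1
    constructor
    · intro h; exact congrArg Prod.snd (h5.mp (Prod.ext e1 h))
    · intro h; exact congrArg Prod.snd (h5.mpr (Prod.ext e2 h))
  have hpat : ∀ p : α, (sa p = sb p ↔ ta p = tb p) ∧ (sa p = sc p ↔ ta p = tc p) ∧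
      (sb p = sc p ↔ tb p = tc p) := by
    intro p
    refine ⟨?_, ?_, ?_⟩ <;>
    · simp only [hsa, hsb, hsc, hta, htb, htc]
      split_ifs
      all_goals first
        | exact Iff.rfl
        | simp
        | exact EXU p ‹_› ‹_›
        | exact EXV p ‹_› ‹_›
        | exact EUV p ‹_› ‹_›
        | exact eq_comm.trans ((EXU p ‹_› ‹_›).trans eq_comm)
        | exact eq_comm.trans ((EXV p ‹_› ‹_›).trans eq_comm)
        | exact eq_comm.trans ((EUV p ‹_› ‹_›).trans eq_comm)
  choose ρ hρa hρb hρc using fun p =>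
    exists_perm_three (sa p) (sb p) (sc p) (ta p) (tb p) (tc p)
      (hpat p).1 (hpat p).2.1 (hpat p).2.2
  refine ⟨Equiv.prodShear π ρ, ?_, ?_, ?_, ?_⟩
  · intro p q
    have hfst : (Equiv.prodShear π ρ p).1 = π p.1 := rfl
    unfold clp
    have he : (Equiv.prodShear π ρ) p = (Equiv.prodShear π ρ) q ↔ p = q :=
      (Equiv.prodShear π ρ).injective.eq_iff
    have hf : (Equiv.prodShear π ρ p).1 = (Equiv.prodShear π ρ q).1 ↔ p.1 = q.1 := by
      simp only [Equiv.prodShear]; exact π.injective.eq_iff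
    rw [if_congr he rfl rfl, if_congr hf rfl rfl]
  · have : ρ x₀.1 x₀.2 = x₀.2 := by
      have h := hρa x₀.1
      simp only [hsa, hta, if_pos rfl] at h
      exact h
    simp [Equiv.prodShear, hπx, this]
  · have : ρ u.1 u.2 = u'.2 := by
      have h := hρb u.1
      simp only [hsb, htb, if_pos rfl] at h
      exact h
    simp [Equiv.prodShear, hπu, this]
  · have : ρ v.1 v.2 = v'.2 := by
      have h := hρc v.1
      simp only [hsc, htc, if_pos rfl] at h
      exact h
    simp [Equiv.prodShear, hπv, this]

/-- The number of points `w` in given classes relative to `x₀`, `y`, `z` depends only on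
the classification pattern of `(x₀, y, z)`. -/
theorem count_eq {α β : Type*} [DecidableEq α] [DecidableEq β] [Fintype α] [Fintype β]
    (x₀ y z y' z' : α × β)
    (hy : clp x₀ y = clp x₀ y') (hz : clp x₀ z = clp x₀ z') (hr : clp y z = clp y' z')
    (h a b : Fin 3) :
    (Finset.univ.filter fun w : α × β => clp x₀ w = h ∧ clp y w = a ∧ clp w z = b).card
      = (Finset.univ.filter fun w : α × β =>
          clp x₀ w = h ∧ clp y' w = a ∧ clp w z' = b).card := by
  obtain ⟨σ, hσcl, hσx, hσu, hσv⟩ := exists_shear x₀ y z y' z'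
    (clp_pt_iff hy) (clp_fst_iff hy) (clp_pt_iff hz) (clp_fst_iff hz)
    (clp_pt_iff hr) (clp_fst_iff hr)
  apply Finset.card_bij (fun w _ => σ w)
  · intro w hw
    simp only [Finset.mem_filter, Finset.mem_univ, true_and] at hw ⊢
    refine ⟨?_, ?_, ?_⟩
    · rw [← hσx, hσcl]; exact hw.1
    · rw [← hσu, hσcl]; exact hw.2.1
    · rw [← hσv, hσcl]; exact hw.2.2
  · intro w1 _ w2 _ hw; exact σ.injective hw
  · intro w' hw'
    refine ⟨σ.symm w', ?_, by simp⟩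
    simp only [Finset.mem_filter, Finset.mem_univ, true_and] at hw' ⊢
    refine ⟨?_, ?_, ?_⟩
    · have := hσcl x₀ (σ.symm w')
      rw [hσx, Equiv.apply_symm_apply] at this
      rw [← this]; exact hw'.1
    · have := hσcl y (σ.symm w')
      rw [hσu] at this
      rw [← this, Equiv.apply_symm_apply]; exact hw'.2.1
    · have := hσcl (σ.symm w') z
      rw [hσv] at this
      rw [← this, Equiv.apply_symm_apply]; exact hw'.2.2





section Main

variable (F : Type) [Field F] {n : ℕ} (ℓ m : Fin n → ℕ) (x : Pt ℓ m)

theorem rel1_iff {a b : ℕ} (j : Fin 3) (u v : Fin a × Fin b) :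
    rel1 j u v ↔ clp u v = j := by
  fin_cases j
  · show rel1 (0 : Fin 3) u v ↔ clp u v = (0 : Fin 3)
    rw [show rel1 (0 : Fin 3) u v ↔ u = v from by simp [rel1]]
    exact clp_eq_zero.symm
  · show rel1 (1 : Fin 3) u v ↔ clp u v = (1 : Fin 3)
    rw [show rel1 (1 : Fin 3) u v ↔ (u ≠ v ∧ u.1 = v.1) from by simp [rel1]]
    exact clp_eq_one.symm
  · show rel1 (2 : Fin 3) u v ↔ clp u v = (2 : Fin 3)
    rw [show rel1 (2 : Fin 3) u v ↔ u.1 ≠ v.1 from by simp [rel1]]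
    exact clp_eq_two.symm

/-- The classification label of a pair of points. -/
noncomputable def clr (y z : Pt ℓ m) : Lbl n := fun i => clp (y i) (z i)

theorem Rel_iff (g : Lbl n) (y z : Pt ℓ m) : Rel ℓ m g y z ↔ clr ℓ m y z = g := by
  constructor
  · intro h; funext i; exact (rel1_iff _ _ _).mp (h i)
  · intro h i; exact (rel1_iff _ _ _).mpr (congrFun h i)

theorem clr_eq_zero (y z : Pt ℓ m) : clr ℓ m y z = 0 ↔ y = z := by
  rw [funext_iff]
  constructor
  · intro h; funext i; exact clp_eq_zero.mp (h i)
  · intro h i; exact clp_eq_zero.mpr (congrFun h i)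

theorem Amat_apply (g : Lbl n) (y z : Pt ℓ m) :
    Amat F ℓ m g y z = if clr ℓ m y z = g then 1 else 0 := by
  unfold Amat
  exact if_congr (Rel_iff ℓ m g y z) rfl rfl

/-- Abbreviation for the triple product `E*_g A_a E*_h`. -/
noncomputable def Bm (g a h : Lbl n) : Matrix (Pt ℓ m) (Pt ℓ m) F :=
  Estar F ℓ m x g * Amat F ℓ m a * Estar F ℓ m x h

theorem Bm_apply (g a h : Lbl n) (y z : Pt ℓ m) :
    Bm F ℓ m x g a h y z =
      if clr ℓ m x y = g ∧ clr ℓ m y z = a ∧ clr ℓ m x z = h then 1 else 0 := by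
  unfold Bm Estar
  rw [Matrix.mul_diagonal, Matrix.diagonal_mul, Amat_apply]
  rw [if_congr (Rel_iff ℓ m g x y) rfl rfl, if_congr (Rel_iff ℓ m h x z) rfl rfl]
  split_ifs <;> simp_all

theorem one_eq_sum : (1 : Matrix (Pt ℓ m) (Pt ℓ m) F) = ∑ g : Lbl n, Bm F ℓ m x g 0 g := by
  ext y z
  rw [Matrix.sum_apply]
  simp only [Bm_apply]
  by_cases hyz : y = z
  · subst hyz
    rw [Matrix.one_apply_eq, Finset.sum_eq_single (clr ℓ m x y)]
    · simp [clr_eq_zero]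
    · intro g _ hg; rw [if_neg]; exact fun hc => hg hc.1.symm
    · intro h; exact absurd (Finset.mem_univ _) h
  · rw [Matrix.one_apply_ne hyz, Finset.sum_eq_zero]
    intro g _
    rw [if_neg]
    exact fun hc => hyz ((clr_eq_zero ℓ m y z).mp hc.2.1)

theorem Estar_eq (g : Lbl n) : Estar F ℓ m x g = Bm F ℓ m x g 0 g := by
  ext y z
  rw [Bm_apply]
  unfold Estar
  rw [Matrix.diagonal_apply]
  by_cases hyz : y = z
  · subst hyz
    rw [if_pos rfl, if_congr (Rel_iff ℓ m g x y) rfl rfl]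
    by_cases hg : clr ℓ m x y = g
    · rw [if_pos hg, if_pos ⟨hg, (clr_eq_zero ℓ m y y).mpr rfl, hg⟩]
    · rw [if_neg hg, if_neg (fun hc => hg hc.1)]
  · rw [if_neg hyz, if_neg (fun hc => hyz ((clr_eq_zero ℓ m y z).mp hc.2.1))]

theorem Amat_eq_sum (a : Lbl n) :
    Amat F ℓ m a = ∑ g : Lbl n, ∑ h : Lbl n, Bm F ℓ m x g a h := by
  ext y z
  rw [Matrix.sum_apply, Amat_apply]
  rw [Finset.sum_eq_single (clr ℓ m x y)]
  · rw [Matrix.sum_apply, Finset.sum_eq_single (clr ℓ m x z)]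
    · rw [Bm_apply]
      by_cases ha : clr ℓ m y z = a
      · rw [if_pos ha, if_pos ⟨rfl, ha, rfl⟩]
      · rw [if_neg ha, if_neg (fun hc => ha hc.2.1)]
    · intro h _ hh; rw [Bm_apply, if_neg (fun hc => hh hc.2.2.symm)]
    · intro h; exact absurd (Finset.mem_univ _) h
  · intro g _ hg; rw [Matrix.sum_apply, Finset.sum_eq_zero]
    intro h _; rw [Bm_apply, if_neg (fun hc => hg hc.1.symm)]
  · intro h; exact absurd (Finset.mem_univ _) h

end Main

section Mult

variable (F : Type) [Field F] {n : ℕ} (ℓ m : Fin n → ℕ) (x : Pt ℓ m)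

/-- Local intersection numbers. -/
noncomputable def nuloc (i : Fin n) (h a b g h' r : Fin 3) : ℕ :=
  if hw : ∃ p : (Fin (ℓ i) × Fin (m i)) × (Fin (ℓ i) × Fin (m i)),
      clp (x i) p.1 = g ∧ clp (x i) p.2 = h' ∧ clp p.1 p.2 = r then
    (Finset.univ.filter fun w : Fin (ℓ i) × Fin (m i) =>
      clp (x i) w = h ∧ clp hw.choose.1 w = a ∧ clp w hw.choose.2 = b).card
  else 0

theorem nuloc_spec (i : Fin n) (h a b : Fin 3) (yi zi : Fin (ℓ i) × Fin (m i)) :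
    (Finset.univ.filter fun w : Fin (ℓ i) × Fin (m i) =>
      clp (x i) w = h ∧ clp yi w = a ∧ clp w zi = b).card
    = nuloc ℓ m x i h a b (clp (x i) yi) (clp (x i) zi) (clp yi zi) := by
  unfold nuloc
  have hw : ∃ p : (Fin (ℓ i) × Fin (m i)) × (Fin (ℓ i) × Fin (m i)),
      clp (x i) p.1 = clp (x i) yi ∧ clp (x i) p.2 = clp (x i) zi ∧
        clp p.1 p.2 = clp yi zi := ⟨(yi, zi), rfl, rfl, rfl⟩
  rw [dif_pos hw]
  exact count_eq (x i) yi zi hw.choose.1 hw.choose.2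
    hw.choose_spec.1.symm hw.choose_spec.2.1.symm hw.choose_spec.2.2.symm h a b

/-- Global intersection numbers. -/
noncomputable def nuF (h a b g h' r : Lbl n) : ℕ :=
  ∏ i, nuloc ℓ m x i (h i) (a i) (b i) (g i) (h' i) (r i)

theorem card_filter_eq_nu (h a b : Lbl n) (y z : Pt ℓ m) :
    (Finset.univ.filter fun w : Pt ℓ m =>
        clr ℓ m x w = h ∧ clr ℓ m y w = a ∧ clr ℓ m w z = b).card
    = nuF ℓ m x h a b (clr ℓ m x y) (clr ℓ m x z) (clr ℓ m y z) := by
  have key : (Finset.univ.filter fun w : Pt ℓ m =>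
        clr ℓ m x w = h ∧ clr ℓ m y w = a ∧ clr ℓ m w z = b)
      = Fintype.piFinset (fun i => Finset.univ.filter fun wi =>
          clp (x i) wi = h i ∧ clp (y i) wi = a i ∧ clp wi (z i) = b i) := by
    ext w
    simp only [Finset.mem_filter, Finset.mem_univ, true_and, Fintype.mem_piFinset]
    unfold clr
    rw [funext_iff, funext_iff, funext_iff]
    exact ⟨fun H i => ⟨H.1 i, H.2.1 i, H.2.2 i⟩,
      fun H => ⟨fun i => (H i).1, fun i => (H i).2.1, fun i => (H i).2.2⟩⟩
  rw [key, Fintype.card_piFinset]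
  exact Finset.prod_congr rfl fun i _ => nuloc_spec ℓ m x i (h i) (a i) (b i) (y i) (z i)

theorem Bm_mul_ne (g a h h₂ b h' : Lbl n) (hne : h ≠ h₂) :
    Bm F ℓ m x g a h * Bm F ℓ m x h₂ b h' = 0 := by
  ext y z
  rw [Matrix.mul_apply]
  simp only [Matrix.zero_apply]
  apply Finset.sum_eq_zero
  intro w _
  rw [Bm_apply, Bm_apply]
  split_ifs with h1 h2
  · exact absurd (h1.2.2.symm.trans h2.1) hne
  all_goals simp

theorem Bm_mul_same (g a h b h' : Lbl n) :
    Bm F ℓ m x g a h * Bm F ℓ m x h b h' =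
      ∑ r : Lbl n, (nuF ℓ m x h a b g h' r : F) • Bm F ℓ m x g r h' := by
  ext y z
  rw [Matrix.mul_apply, Matrix.sum_apply]
  have RHS : ∀ r : Lbl n, ((nuF ℓ m x h a b g h' r : F) • Bm F ℓ m x g r h') y z
      = (nuF ℓ m x h a b g h' r : F) *
        (if clr ℓ m x y = g ∧ clr ℓ m y z = r ∧ clr ℓ m x z = h' then 1 else 0) := by
    intro r; rw [Matrix.smul_apply, Bm_apply, smul_eq_mul]
  simp only [RHS]
  by_cases hgh : clr ℓ m x y = g ∧ clr ℓ m x z = h'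
  · have L : ∑ w : Pt ℓ m, Bm F ℓ m x g a h y w * Bm F ℓ m x h b h' w z
        = ∑ w : Pt ℓ m, if clr ℓ m x w = h ∧ clr ℓ m y w = a ∧ clr ℓ m w z = b
            then (1 : F) else 0 := by
      apply Finset.sum_congr rfl
      intro w _
      rw [Bm_apply, Bm_apply]
      by_cases h1 : clr ℓ m x y = g ∧ clr ℓ m y w = a ∧ clr ℓ m x w = h
      · by_cases h2 : clr ℓ m x w = h ∧ clr ℓ m w z = b ∧ clr ℓ m x z = h'
        · rw [if_pos h1, if_pos h2, if_pos ⟨h1.2.2, h1.2.1, h2.2.1⟩, one_mul]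
        · rw [if_pos h1, if_neg h2, if_neg (fun hc => h2 ⟨hc.1, hc.2.2, hgh.2⟩), one_mul]
      · rw [if_neg h1, zero_mul, if_neg (fun hc => h1 ⟨hgh.1, hc.2.1, hc.1⟩)]
    rw [L, Finset.sum_boole, card_filter_eq_nu, hgh.1, hgh.2]
    rw [Finset.sum_eq_single (clr ℓ m y z)]
    · rw [if_pos ⟨rfl, rfl, rfl⟩, mul_one]
    · intro r _ hr; rw [if_neg (fun hc => hr hc.2.1.symm), mul_zero]
    · intro hmem; exact absurd (Finset.mem_univ _) hmem
  · have L : ∑ w : Pt ℓ m, Bm F ℓ m x g a h y w * Bm F ℓ m x h b h' w z = 0 := by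
      apply Finset.sum_eq_zero
      intro w _
      rw [Bm_apply, Bm_apply]
      split_ifs with h1 h2
      · exact absurd ⟨h1.1, h2.2.2⟩ hgh
      · exact mul_zero _
      · exact zero_mul _
      · exact zero_mul _
    rw [L, Finset.sum_eq_zero]
    intro r _
    rw [if_neg (fun hc => hgh ⟨hc.1, hc.2.2⟩), mul_zero]

end Mult

section Span

variable (F : Type) [Field F] {n : ℕ} (ℓ m : Fin n → ℕ) (x : Pt ℓ m)

/-- The span of the matrices `E*_g A_a E*_h`. -/
noncomputable def SpanB : Submodule F (Matrix (Pt ℓ m) (Pt ℓ m) F) :=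
  Submodule.span F
    (Set.range fun t : Lbl n × Lbl n × Lbl n => Bm F ℓ m x t.1 t.2.1 t.2.2)

theorem Bm_mem_SpanB (g a h : Lbl n) : Bm F ℓ m x g a h ∈ SpanB F ℓ m x :=
  Submodule.subset_span ⟨(g, a, h), rfl⟩

theorem one_mem_SpanB : (1 : Matrix (Pt ℓ m) (Pt ℓ m) F) ∈ SpanB F ℓ m x := by
  rw [one_eq_sum F ℓ m x]
  exact Submodule.sum_mem _ fun g _ => Bm_mem_SpanB F ℓ m x g 0 g

theorem mul_mem_SpanB : ∀ M ∈ SpanB F ℓ m x, ∀ N ∈ SpanB F ℓ m x,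
    M * N ∈ SpanB F ℓ m x := by
  have key : ∀ t s : Lbl n × Lbl n × Lbl n,
      Bm F ℓ m x t.1 t.2.1 t.2.2 * Bm F ℓ m x s.1 s.2.1 s.2.2 ∈ SpanB F ℓ m x := by
    intro t s
    by_cases he : t.2.2 = s.1
    · rw [← he, Bm_mul_same]
      exact Submodule.sum_mem _ fun r _ =>
        Submodule.smul_mem _ _ (Bm_mem_SpanB F ℓ m x t.1 r s.2.2)
    · rw [Bm_mul_ne F ℓ m x t.1 t.2.1 t.2.2 s.1 s.2.1 s.2.2 he]
      exact Submodule.zero_mem _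
  intro M hM N hN
  have hmm : M * N ∈ SpanB F ℓ m x * SpanB F ℓ m x := Submodule.mul_mem_mul hM hN
  unfold SpanB at hmm ⊢
  rw [Submodule.span_mul_span] at hmm
  refine Submodule.span_le.mpr ?_ hmm
  rintro _ ⟨p, hp, q, hq, rfl⟩
  obtain ⟨t, rfl⟩ := hp
  obtain ⟨s, rfl⟩ := hq
  exact key t s

/-- The span as a subalgebra. -/
noncomputable def SalgB : Subalgebra F (Matrix (Pt ℓ m) (Pt ℓ m) F) :=
  (SpanB F ℓ m x).toSubalgebra (one_mem_SpanB F ℓ m x)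
    (fun _ _ hM hN => mul_mem_SpanB F ℓ m x _ hM _ hN)

theorem Talg_toSubmodule_eq :
    Subalgebra.toSubmodule (Talg F ℓ m x) = SpanB F ℓ m x := by
  apply le_antisymm
  · intro M hM
    have hle : Talg F ℓ m x ≤ SalgB F ℓ m x := by
      apply Algebra.adjoin_le
      rintro N (⟨g, rfl⟩ | ⟨g, rfl⟩)
      · show Amat F ℓ m g ∈ SpanB F ℓ m x
        rw [Amat_eq_sum F ℓ m x g]
        exact Submodule.sum_mem _ fun g' _ =>
          Submodule.sum_mem _ fun h' _ => Bm_mem_SpanB F ℓ m x g' g h'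
      · show Estar F ℓ m x g ∈ SpanB F ℓ m x
        rw [Estar_eq F ℓ m x g]
        exact Bm_mem_SpanB F ℓ m x g 0 g
    exact hle hM
  · rw [show (SpanB F ℓ m x : Submodule F _) = Submodule.span F
        (Set.range fun t : Lbl n × Lbl n × Lbl n => Bm F ℓ m x t.1 t.2.1 t.2.2) from rfl,
      Submodule.span_le]
    rintro _ ⟨t, rfl⟩
    show Bm F ℓ m x t.1 t.2.1 t.2.2 ∈ Talg F ℓ m x
    unfold Bm
    exact mul_mem
      (mul_mem (Algebra.subset_adjoin (Or.inr ⟨t.1, rfl⟩))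
        (Algebra.subset_adjoin (Or.inl ⟨t.2.1, rfl⟩)))
      (Algebra.subset_adjoin (Or.inr ⟨t.2.2, rfl⟩))

end Span

section Card

variable (F : Type) [Field F] {n : ℕ} (ℓ m : Fin n → ℕ) (x : Pt ℓ m)

/-- The locally feasible triples at coordinate `i`. -/
noncomputable def Loc (i : Fin n) : Finset (Fin 3 × Fin 3 × Fin 3) :=
  Finset.univ.filter fun t => ∃ u v : Fin (ℓ i) × Fin (m i),
    clp (x i) u = t.1 ∧ clp u v = t.2.1 ∧ clp (x i) v = t.2.2

theorem mem_Loc (i : Fin n) (t : Fin 3 × Fin 3 × Fin 3) :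
    t ∈ Loc ℓ m x i ↔ ∃ u v : Fin (ℓ i) × Fin (m i),
      clp (x i) u = t.1 ∧ clp u v = t.2.1 ∧ clp (x i) v = t.2.2 := by
  simp [Loc]

/-- Index type for the basis. -/
abbrev Idx : Type := ∀ i : Fin n, {t : Fin 3 × Fin 3 × Fin 3 // t ∈ Loc ℓ m x i}

/-- The basis family. -/
noncomputable def Mfam (s : Idx ℓ m x) : Matrix (Pt ℓ m) (Pt ℓ m) F :=
  Bm F ℓ m x (fun i => (s i).1.1) (fun i => (s i).1.2.1) (fun i => (s i).1.2.2)

theorem Bm_eq_zero (g a h : Lbl n) (hin : ¬ ∀ i, (g i, a i, h i) ∈ Loc ℓ m x i) :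
    Bm F ℓ m x g a h = 0 := by
  push_neg at hin
  obtain ⟨i, hi⟩ := hin
  ext y z
  rw [Bm_apply, Matrix.zero_apply, if_neg]
  rintro ⟨hg, ha, hh⟩
  exact hi ((mem_Loc ℓ m x i _).mpr
    ⟨y i, z i, congrFun hg i, congrFun ha i, congrFun hh i⟩)

theorem SpanB_eq_span_Mfam :
    SpanB F ℓ m x = Submodule.span F (Set.range (Mfam F ℓ m x)) := by
  apply le_antisymm
  · unfold SpanB
    rw [Submodule.span_le]
    rintro _ ⟨t, rfl⟩
    by_cases hin : ∀ i, (t.1 i, t.2.1 i, t.2.2 i) ∈ Loc ℓ m x i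
    · exact Submodule.subset_span ⟨fun i => ⟨(t.1 i, t.2.1 i, t.2.2 i), hin i⟩, rfl⟩
    · show Bm F ℓ m x t.1 t.2.1 t.2.2 ∈ _
      rw [Bm_eq_zero F ℓ m x _ _ _ hin]
      exact Submodule.zero_mem _
  · rw [Submodule.span_le]
    rintro _ ⟨s, rfl⟩
    exact Bm_mem_SpanB F ℓ m x _ _ _

theorem Mfam_li : LinearIndependent F (Mfam F ℓ m x) := by
  rw [linearIndependent_iff']
  intro s c hsum t ht
  have hw : ∀ i, ∃ u v : Fin (ℓ i) × Fin (m i),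
      clp (x i) u = (t i).1.1 ∧ clp u v = (t i).1.2.1 ∧ clp (x i) v = (t i).1.2.2 := by
    intro i
    have := (t i).2
    rw [mem_Loc] at this
    exact this
  choose u v hu huv hv using hw
  have heval : (∑ j ∈ s, c j • Mfam F ℓ m x j) u v = 0 := by rw [hsum]; rfl
  rw [Matrix.sum_apply] at heval
  have hterm : ∀ j ∈ s, (c j • Mfam F ℓ m x j) u v = if j = t then c j else 0 := by
    intro j _
    rw [Matrix.smul_apply]
    unfold Mfam
    rw [Bm_apply]
    by_cases hj : j = t
    · subst hj
      rw [if_pos ⟨funext fun i => hu i, funext fun i => huv i, funext fun i => hv i⟩,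
        if_pos rfl, smul_eq_mul, mul_one]
    · rw [if_neg, if_neg hj, smul_zero]
      rintro ⟨hg, ha, hh⟩
      apply hj
      funext i
      apply Subtype.ext
      have e1 : (j i).1.1 = (t i).1.1 := (congrFun hg i).symm.trans (hu i)
      have e2 : (j i).1.2.1 = (t i).1.2.1 := (congrFun ha i).symm.trans (huv i)
      have e3 : (j i).1.2.2 = (t i).1.2.2 := (congrFun hh i).symm.trans (hv i)
      exact Prod.ext e1 (Prod.ext e2 e3)
  rw [Finset.sum_congr rfl hterm, Finset.sum_ite_eq' s t c, if_pos ht] at heval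
  exact heval

theorem finrank_Talg :
    Module.finrank F ↥(Talg F ℓ m x) = ∏ i, (Loc ℓ m x i).card := by
  have h1 : Module.finrank F ↥(Talg F ℓ m x)
      = Module.finrank F ↥(SpanB F ℓ m x) := by
    have he : Subalgebra.toSubmodule (Talg F ℓ m x) = SpanB F ℓ m x :=
      Talg_toSubmodule_eq F ℓ m x
    rw [← he]
    rfl
  rw [h1, SpanB_eq_span_Mfam, finrank_span_eq_card (Mfam_li F ℓ m x), Fintype.card_pi]
  exact Finset.prod_congr rfl fun i _ => Fintype.card_coe _

end Card

section Loccard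

/-- Explicit description of the locally feasible triples. -/
@[reducible] def locPred (L M : Prop) (t : Fin 3 × Fin 3 × Fin 3) : Prop :=
  (t.1 = 0 ∧ t.2.1 = t.2.2) ∨
  (t.1 ≠ 0 ∧ t.2.2 = 0 ∧ t.2.1 = t.1) ∨
  (t.1 = 1 ∧ t.2.2 = 1 ∧ (t.2.1 = 0 ∨ (t.2.1 = 1 ∧ M))) ∨
  (t.1 = 2 ∧ t.2.2 = 2 ∧ (t.2.1 = 0 ∨ t.2.1 = 1 ∨ (t.2.1 = 2 ∧ L))) ∨
  (((t.1 = 1 ∧ t.2.2 = 2) ∨ (t.1 = 2 ∧ t.2.2 = 1)) ∧ t.2.1 = 2)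

theorem exists_ne_fin {k : ℕ} (hk : 2 ≤ k) (p : Fin k) : ∃ q : Fin k, q ≠ p := by
  apply Fintype.exists_ne_of_one_lt_card
  rw [Fintype.card_fin]
  omega

theorem exists_third_fin {k : ℕ} (hk : 2 < k) (p q : Fin k) :
    ∃ r : Fin k, r ≠ p ∧ r ≠ q := by
  by_contra hcon
  push_neg at hcon
  have hsub : (Finset.univ : Finset (Fin k)) ⊆ {p, q} := by
    intro r _
    rcases eq_or_ne r p with h | h
    · simp [h]
    · simp [hcon r h]
  have h1 : (Finset.univ : Finset (Fin k)).card ≤ ({p, q} : Finset (Fin k)).card :=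
    Finset.card_le_card hsub
  have h2 : ({p, q} : Finset (Fin k)).card ≤ 2 :=
    (Finset.card_insert_le _ _).trans (by simp)
  rw [Finset.card_univ, Fintype.card_fin] at h1
  omega

theorem three_distinct {k : ℕ} {a b c : Fin k} (h1 : a ≠ b) (h2 : a ≠ c) (h3 : b ≠ c) :
    2 < k := by
  have hcard : ({a, b, c} : Finset (Fin k)).card = 3 := by
    rw [Finset.card_insert_of_notMem (by simp [h1, h2]),
      Finset.card_insert_of_notMem (by simp [h3]), Finset.card_singleton]
  have := Finset.card_le_univ ({a, b, c} : Finset (Fin k))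
  rw [Fintype.card_fin] at this
  omega

theorem loc_char {a b : ℕ} (ha : 2 ≤ a) (hb : 2 ≤ b) (x₀ : Fin a × Fin b)
    (t : Fin 3 × Fin 3 × Fin 3) :
    (∃ u v : Fin a × Fin b, clp x₀ u = t.1 ∧ clp u v = t.2.1 ∧ clp x₀ v = t.2.2) ↔
      locPred (2 < a) (2 < b) t := by
  obtain ⟨q, hq⟩ := exists_ne_fin hb x₀.2
  obtain ⟨p, hp⟩ := exists_ne_fin ha x₀.1
  have hs : clp x₀ (x₀.1, q) = 1 :=
    clp_eq_one.mpr ⟨fun h => hq (congrArg Prod.snd h).symm, rfl⟩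
  have ho : clp x₀ (p, x₀.2) = 2 := clp_eq_two.mpr (Ne.symm hp)
  have wit : ∀ c : Fin 3, ∃ w : Fin a × Fin b, clp x₀ w = c := by
    intro c
    fin_cases c
    · exact ⟨x₀, clp_eq_zero.mpr rfl⟩
    · exact ⟨(x₀.1, q), hs⟩
    · exact ⟨(p, x₀.2), ho⟩
  obtain ⟨g, a', h⟩ := t
  constructor
  · rintro ⟨u, v, rfl, rfl, rfl⟩
    unfold locPred
    dsimp only
    by_cases hu0 : u = x₀
    · left
      exact ⟨by rw [hu0]; exact clp_eq_zero.mpr rfl, by rw [hu0]⟩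
    by_cases hv0 : v = x₀
    · right; left
      refine ⟨fun h => hu0 (clp_eq_zero.mp h).symm, by rw [hv0]; exact clp_eq_zero.mpr rfl, ?_⟩
      rw [hv0, clp_comm]
    by_cases hu1 : x₀.1 = u.1 <;> by_cases hv1 : x₀.1 = v.1
    · -- both in the group of x₀
      right; right; left
      refine ⟨clp_eq_one.mpr ⟨Ne.symm hu0, hu1⟩, clp_eq_one.mpr ⟨Ne.symm hv0, hv1⟩, ?_⟩
      by_cases huv : u = v
      · exact Or.inl (clp_eq_zero.mpr huv)
      · refine Or.inr ⟨clp_eq_one.mpr ⟨huv, hu1.symm.trans hv1⟩, ?_⟩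
        have d1 : x₀.2 ≠ u.2 := fun h => hu0 (Prod.ext hu1 h).symm
        have d2 : x₀.2 ≠ v.2 := fun h => hv0 (Prod.ext hv1 h).symm
        have d3 : u.2 ≠ v.2 := fun h => huv (Prod.ext (hu1.symm.trans hv1) h)
        exact three_distinct d1 d2 d3
    · -- u in group, v outside
      right; right; right; right
      refine ⟨Or.inl ⟨clp_eq_one.mpr ⟨Ne.symm hu0, hu1⟩, clp_eq_two.mpr hv1⟩, ?_⟩
      exact clp_eq_two.mpr (fun h => hv1 (hu1.trans h))
    · right; right; right; right
      refine ⟨Or.inr ⟨clp_eq_two.mpr hu1, clp_eq_one.mpr ⟨Ne.symm hv0, hv1⟩⟩, ?_⟩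
      exact clp_eq_two.mpr (fun h => hu1 (h.symm ▸ hv1 : _))
    · -- both outside
      right; right; right; left
      refine ⟨clp_eq_two.mpr hu1, clp_eq_two.mpr hv1, ?_⟩
      by_cases huv : u = v
      · exact Or.inl (clp_eq_zero.mpr huv)
      by_cases huv1 : u.1 = v.1
      · exact Or.inr (Or.inl (clp_eq_one.mpr ⟨huv, huv1⟩))
      · refine Or.inr (Or.inr ⟨clp_eq_two.mpr huv1, ?_⟩)
        exact three_distinct hu1 hv1 huv1
  · intro hloc
    unfold locPred at hloc
    dsimp only at hloc
    rcases hloc with ⟨h1, h2⟩ | ⟨h1, h2, h3⟩ | ⟨h1, h2, h3⟩ | ⟨h1, h2, h3⟩ | ⟨h1, h2⟩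
    · -- g = 0, a' = h
      obtain ⟨w, hw⟩ := wit h
      refine ⟨x₀, w, ?_, ?_, hw⟩
      · simp only [h1]; exact clp_eq_zero.mpr rfl
      · simp only [h2]; exact hw
    · -- h = 0, a' = g
      obtain ⟨w, hw⟩ := wit g
      refine ⟨w, x₀, hw, ?_, ?_⟩
      · simp only [h3]; rw [clp_comm]; exact hw
      · simp only [h2]; exact clp_eq_zero.mpr rfl
    · -- g = h = 1
      rcases h3 with h3 | ⟨h3, hM⟩
      · refine ⟨(x₀.1, q), (x₀.1, q), ?_, ?_, ?_⟩
        · simp only [h1]; exact hs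
        · simp only [h3]; exact clp_eq_zero.mpr rfl
        · simp only [h2]; exact hs
      · obtain ⟨r, hr1, hr2⟩ := exists_third_fin hM x₀.2 q
        refine ⟨(x₀.1, q), (x₀.1, r), ?_, ?_, ?_⟩
        · simp only [h1]; exact hs
        · simp only [h3]
          refine clp_eq_one.mpr ⟨?_, rfl⟩
          intro hh
          exact hr2 (congrArg Prod.snd hh).symm
        · simp only [h2]
          refine clp_eq_one.mpr ⟨?_, rfl⟩
          intro hh
          exact hr1 (congrArg Prod.snd hh).symm
    · -- g = h = 2
      rcases h3 with h3 | h3 | ⟨h3, hL⟩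
      · refine ⟨(p, x₀.2), (p, x₀.2), ?_, ?_, ?_⟩
        · simp only [h1]; exact ho
        · simp only [h3]; exact clp_eq_zero.mpr rfl
        · simp only [h2]; exact ho
      · refine ⟨(p, x₀.2), (p, q), ?_, ?_, ?_⟩
        · simp only [h1]; exact ho
        · simp only [h3]
          refine clp_eq_one.mpr ⟨?_, rfl⟩
          intro hh
          exact hq (congrArg Prod.snd hh).symm
        · simp only [h2]; exact clp_eq_two.mpr (Ne.symm hp)
      · obtain ⟨r, hr1, hr2⟩ := exists_third_fin hL x₀.1 p
        refine ⟨(p, x₀.2), (r, x₀.2), ?_, ?_, ?_⟩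
        · simp only [h1]; exact ho
        · simp only [h3]
          exact clp_eq_two.mpr (fun hh : p = r => hr2 hh.symm)
        · simp only [h2]; exact clp_eq_two.mpr (Ne.symm hr1)
    · -- mixed 1/2
      rcases h1 with ⟨hg, hh⟩ | ⟨hg, hh⟩
      · refine ⟨(x₀.1, q), (p, x₀.2), ?_, ?_, ?_⟩
        · simp only [hg]; exact hs
        · simp only [h2]
          exact clp_eq_two.mpr (fun hh2 : x₀.1 = p => hp hh2.symm)
        · simp only [hh]; exact ho
      · refine ⟨(p, x₀.2), (x₀.1, q), ?_, ?_, ?_⟩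
        · simp only [hg]; exact ho
        · simp only [h2]
          exact clp_eq_two.mpr (fun hh2 : p = x₀.1 => hp hh2)
        · simp only [hh]; exact hs

end Loccard

section Final

variable (F : Type) [Field F] {n : ℕ} (ℓ m : Fin n → ℕ) (x : Pt ℓ m)

theorem locPred_congr {L L' M M' : Prop} (hL : L ↔ L') (hM : M ↔ M')
    (t : Fin 3 × Fin 3 × Fin 3) : locPred L M t ↔ locPred L' M' t := by
  unfold locPred
  simp only [hL, hM]

theorem card_loc (i : Fin n) (hl : 2 ≤ ℓ i) (hm : 2 ≤ m i) :
    (Loc ℓ m x i).card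
      = 10 + (if 2 < ℓ i then 1 else 0) + (if 2 < m i then 1 else 0) := by
  have hset : Loc ℓ m x i
      = Finset.univ.filter (fun t => locPred (2 < ℓ i) (2 < m i) t) := by
    ext t
    rw [mem_Loc, Finset.mem_filter]
    constructor
    · intro hh; exact ⟨Finset.mem_univ _, (loc_char hl hm (x i) t).mp hh⟩
    · intro hh; exact (loc_char hl hm (x i) t).mpr hh.2
  rw [hset]
  by_cases hL : 2 < ℓ i <;> by_cases hM : 2 < m i
  · rw [Finset.filter_congr
      (fun t _ => locPred_congr (iff_true_intro hL) (iff_true_intro hM) t),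
      if_pos hL, if_pos hM]
    decide
  · rw [Finset.filter_congr
      (fun t _ => locPred_congr (iff_true_intro hL) (iff_false_intro hM) t),
      if_pos hL, if_neg hM]
    decide
  · rw [Finset.filter_congr
      (fun t _ => locPred_congr (iff_false_intro hL) (iff_true_intro hM) t),
      if_neg hL, if_pos hM]
    decide
  · rw [Finset.filter_congr
      (fun t _ => locPred_congr (iff_false_intro hL) (iff_false_intro hM) t),
      if_neg hL, if_neg hM]
    decide

end Final

/-- `dim_F T = 2^(n₁+2n₄) · 3^(n₄) · 5^(n₁) · 11^(n₂+n₃)`. -/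
theorem statement2 (F : Type) [Field F] (n : ℕ) (hn : 1 ≤ n) (ℓ m : Fin n → ℕ)
    (hℓ : ∀ i, 2 ≤ ℓ i) (hm : ∀ i, 2 ≤ m i) (x : Pt ℓ m)
    (n1 n2 n3 n4 : ℕ)
    (hn1 : n1 = (Finset.univ.filter fun a : Fin n => ℓ a = 2 ∧ m a = 2).card)
    (hn2 : n2 = (Finset.univ.filter fun a : Fin n => 2 < ℓ a ∧ m a = 2).card)
    (hn3 : n3 = (Finset.univ.filter fun a : Fin n => 2 < m a ∧ ℓ a = 2).card)
    (hn4 : n4 = (Finset.univ.filter fun a : Fin n => 2 < ℓ a ∧ 2 < m a).card) :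
    Module.finrank F ↥(Talg F ℓ m x) = 2 ^ (n1 + 2 * n4) * 3 ^ n4 * 5 ^ n1 * 11 ^ (n2 + n3) := by
  have hrank := finrank_Talg F ℓ m x
  have hcard : ∀ i, (Loc ℓ m x i).card
      = 10 ^ (if ℓ i = 2 ∧ m i = 2 then 1 else 0)
      * 11 ^ (if 2 < ℓ i ∧ m i = 2 then 1 else 0)
      * 11 ^ (if 2 < m i ∧ ℓ i = 2 then 1 else 0)
      * 12 ^ (if 2 < ℓ i ∧ 2 < m i then 1 else 0) := by
    intro i
    rw [card_loc ℓ m x i (hℓ i) (hm i)]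
    rcases eq_or_lt_of_le (hℓ i) with hL | hL <;> rcases eq_or_lt_of_le (hm i) with hM | hM
    · rw [if_neg (show ¬ 2 < ℓ i by omega), if_neg (show ¬ 2 < m i by omega),
        if_pos ⟨hL.symm, hM.symm⟩, if_neg (fun hc => by omega : ¬(2 < ℓ i ∧ m i = 2)),
        if_neg (fun hc => by omega : ¬(2 < m i ∧ ℓ i = 2)),
        if_neg (fun hc => by omega : ¬(2 < ℓ i ∧ 2 < m i))]
      norm_num
    · rw [if_neg (show ¬ 2 < ℓ i by omega), if_pos hM,
        if_neg (fun hc => by omega : ¬(ℓ i = 2 ∧ m i = 2)),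
        if_neg (fun hc => by omega : ¬(2 < ℓ i ∧ m i = 2)),
        if_pos ⟨hM, hL.symm⟩,
        if_neg (fun hc => by omega : ¬(2 < ℓ i ∧ 2 < m i))]
      norm_num
    · rw [if_pos hL, if_neg (show ¬ 2 < m i by omega),
        if_neg (fun hc => by omega : ¬(ℓ i = 2 ∧ m i = 2)),
        if_pos ⟨hL, hM.symm⟩,
        if_neg (fun hc => by omega : ¬(2 < m i ∧ ℓ i = 2)),
        if_neg (fun hc => by omega : ¬(2 < ℓ i ∧ 2 < m i))]
      norm_num
    · rw [if_pos hL, if_pos hM,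
        if_neg (fun hc => by omega : ¬(ℓ i = 2 ∧ m i = 2)),
        if_neg (fun hc => by omega : ¬(2 < ℓ i ∧ m i = 2)),
        if_neg (fun hc => by omega : ¬(2 < m i ∧ ℓ i = 2)),
        if_pos ⟨hL, hM⟩]
      norm_num
  have hp : ∏ i, (Loc ℓ m x i).card = 10 ^ n1 * 11 ^ n2 * 11 ^ n3 * 12 ^ n4 := by
    calc ∏ i, (Loc ℓ m x i).card
        = ∏ i, (10 ^ (if ℓ i = 2 ∧ m i = 2 then 1 else 0)
          * 11 ^ (if 2 < ℓ i ∧ m i = 2 then 1 else 0)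
          * 11 ^ (if 2 < m i ∧ ℓ i = 2 then 1 else 0)
          * 12 ^ (if 2 < ℓ i ∧ 2 < m i then 1 else 0)) :=
        Finset.prod_congr rfl fun i _ => hcard i
      _ = 10 ^ n1 * 11 ^ n2 * 11 ^ n3 * 12 ^ n4 := by
        rw [Finset.prod_mul_distrib, Finset.prod_mul_distrib, Finset.prod_mul_distrib,
          Finset.prod_pow_eq_pow_sum, Finset.prod_pow_eq_pow_sum,
          Finset.prod_pow_eq_pow_sum, Finset.prod_pow_eq_pow_sum,
          Finset.sum_boole, Finset.sum_boole, Finset.sum_boole, Finset.sum_boole,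
          Nat.cast_id, Nat.cast_id, Nat.cast_id, Nat.cast_id,
          hn1, hn2, hn3, hn4]
  rw [hrank, hp]
  rw [show (10 : ℕ) = 2 * 5 by norm_num, show (12 : ℕ) = 2 ^ 2 * 3 by norm_num,
    mul_pow, mul_pow, pow_add 2 n1 (2 * n4), pow_add 11 n2 n3,
    mul_comm 2 n4, pow_mul]
  rw [← pow_mul, ← pow_mul]
  ring

end GDScheme
end
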